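/- Let S be a Γ-semigroup and γ₀ ∈ Γ such that S_{γ₀} is a simple semigroup. Then Σ' = Σ \ Γ (the elements of Σ represented by words of the forms x, γx, xγ, γxγ') is a simple subsemigroup of Σ: its only two-sided ideal is Σ' itself. -/

import Mathlib

open FreeSemigroup

section GammaSemigroup

variable {S Γ : Type}

/-- One-step rewriting on words over S ⊕ Γ. -/
inductive GStep (m : S → Γ → S → S) (γ₀ : Γ) : List (S ⊕ Γ) → List (S ⊕ Γ) → Prop
  | gg (u v : List (S ⊕ Γ)) (γ₁ γ₂ : Γ) :
      GStep m γ₀ (u ++ Sum.inr γ₁ :: Sum.inr γ₂ :: v) (u ++ Sum.inr γ₁ :: v)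
  | xgy (u v : List (S ⊕ Γ)) (x : S) (γ : Γ) (y : S) :
      GStep m γ₀ (u ++ Sum.inl x :: Sum.inr γ :: Sum.inl y :: v) (u ++ Sum.inl (m x γ y) :: v)
  | xy (u v : List (S ⊕ Γ)) (x y : S) :
      GStep m γ₀ (u ++ Sum.inl x :: Sum.inl y :: v) (u ++ Sum.inl (m x γ₀ y) :: v)

/-- The defining relations on the free semigroup on S ⊕ Γ. -/
def GRel (m : S → Γ → S → S) (γ₀ : Γ) :
    FreeSemigroup (S ⊕ Γ) → FreeSemigroup (S ⊕ Γ) → Prop :=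
  fun a b =>
    (∃ γ₁ γ₂ : Γ, a = of (Sum.inr γ₁) * of (Sum.inr γ₂) ∧ b = of (Sum.inr γ₁)) ∨
    (∃ (x y : S) (γ : Γ), a = of (Sum.inl x) * of (Sum.inr γ) * of (Sum.inl y) ∧
      b = of (Sum.inl (m x γ y))) ∨
    (∃ x y : S, a = of (Sum.inl x) * of (Sum.inl y) ∧ b = of (Sum.inl (m x γ₀ y)))

/-- The congruence generated by the defining relations. -/
def GCon (m : S → Γ → S → S) (γ₀ : Γ) : Con (FreeSemigroup (S ⊕ Γ)) := conGen (GRel m γ₀)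

/-- The universal semigroup Σ of the Γ-semigroup S. -/
abbrev USem (m : S → Γ → S → S) (γ₀ : Γ) := (GCon m γ₀).Quotient

/-- The canonical map μ : S → Σ. -/
def gmu (m : S → Γ → S → S) (γ₀ : Γ) (x : S) : USem m γ₀ :=
  ((of (Sum.inl x) : FreeSemigroup (S ⊕ Γ)) : (GCon m γ₀).Quotient)

/-- The canonical map Γ → Σ. -/
def giota (m : S → Γ → S → S) (γ₀ : Γ) (γ : Γ) : USem m γ₀ :=
  ((of (Sum.inr γ) : FreeSemigroup (S ⊕ Γ)) : (GCon m γ₀).Quotient)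

/-- Principal left ideal of an element of a semigroup. -/
def pLeft {T : Type} [Semigroup T] (a : T) : Set T := {w | ∃ t : T, w = t * a} ∪ {a}

/-- Principal right ideal of an element of a semigroup. -/
def pRight {T : Type} [Semigroup T] (a : T) : Set T := {w | ∃ t : T, w = a * t} ∪ {a}

/-- Principal left ideal in the Γ-semigroup: SΓx ∪ {x}. -/
def pLeftG (m : S → Γ → S → S) (x : S) : Set S := {y | ∃ (s : S) (γ : Γ), y = m s γ x} ∪ {x}

/-- Principal right ideal in the Γ-semigroup: xΓS ∪ {x}. -/
def pRightG (m : S → Γ → S → S) (x : S) : Set S := {y | ∃ (γ : Γ) (s : S), y = m x γ s} ∪ {x}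

/-- Green's H relation on the Γ-semigroup. -/
def HrelG (m : S → Γ → S → S) (a b : S) : Prop := pLeftG m a = pLeftG m b ∧ pRightG m a = pRightG m b

/-- S_δ is a simple semigroup: its only two-sided ideal is S itself. -/
def SimpleAt (m : S → Γ → S → S) (δ : Γ) : Prop :=
  ∀ J : Set S, J.Nonempty → (∀ t : S, ∀ j ∈ J, m t δ j ∈ J ∧ m j δ t ∈ J) → J = Set.univ

/-- e is an idempotent of S_δ. -/
def IdemAt (m : S → Γ → S → S) (δ : Γ) (e : S) : Prop := m e δ e = e

/-- e is a primitive idempotent of S_δ. -/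
def PrimAt (m : S → Γ → S → S) (δ : Γ) (e : S) : Prop :=
  IdemAt m δ e ∧ ∀ f, IdemAt m δ f → m e δ f = f → m f δ e = f → f = e

/-- S_δ is completely simple. -/
def CSimpleAt (m : S → Γ → S → S) (δ : Γ) : Prop := SimpleAt m δ ∧ ∃ e, PrimAt m δ e

/-- S_δ has no zero element. -/
def NoZeroAt (m : S → Γ → S → S) (δ : Γ) : Prop := ¬ ∃ z : S, ∀ t : S, m z δ t = z ∧ m t δ z = z

/-- L is a left ideal of S_δ. -/
def LIdealAt (m : S → Γ → S → S) (δ : Γ) (L : Set S) : Prop :=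
  L.Nonempty ∧ ∀ t : S, ∀ l ∈ L, m t δ l ∈ L

/-- L is a minimal left ideal of S_δ. -/
def MinLIdealAt (m : S → Γ → S → S) (δ : Γ) (L : Set S) : Prop :=
  LIdealAt m δ L ∧ ∀ L' ⊆ L, LIdealAt m δ L' → L' = L

/-- S_δ is a group. -/
def GroupAt (m : S → Γ → S → S) (δ : Γ) : Prop :=
  ∃ e : S, (∀ a, m e δ a = a ∧ m a δ e = a) ∧ ∀ a, ∃ b, m a δ b = e ∧ m b δ a = e

/-- G is a subgroup (a sub-semigroup that is a group) of the semigroup T. -/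
def IsSubgroupOf {T : Type} [Semigroup T] (G : Set T) : Prop :=
  (∀ a ∈ G, ∀ b ∈ G, a * b ∈ G) ∧
  ∃ e ∈ G, (∀ g ∈ G, e * g = g ∧ g * e = g) ∧ ∀ g ∈ G, ∃ h ∈ G, g * h = e ∧ h * g = e

/-- The set Σ' = Σ \ Γ. -/
def USem' (m : S → Γ → S → S) (γ₀ : Γ) : Set (USem m γ₀) := {w | ¬ ∃ γ : Γ, w = giota m γ₀ γ}

end GammaSemigroup

/-! Every element of Σ has a unique normal form: a single letter γ, or a word `⟨γ⟩ x ⟨γ'⟩` with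
one letter x of S and optional outer letters of Γ, since every inner factor `xγy`, `xγγ'…y` or
`xy` collapses to a letter of S. Σ' is the set of words of the second kind, so it is closed under
multiplication. Simplicity of S_{γ₀} gives S = S γ₀ S, hence every w ∈ Σ' factors as `u μ(b) v` with
u, v ∈ Σ'. An ideal J of Σ' contains `μ(b) j μ(b) ∈ μ(S)` for j ∈ J, and `{x | μ(x) ∈ J}` is an
ideal of S_{γ₀}, hence all of S; so J contains every `u μ(b) v`. -/

namespace GammaSemigroup

variable {S Γ : Type}

abbrev IsGammaAssoc (m : S → Γ → S → S) : Prop :=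
  ∀ (a b c : S) (α β : Γ), m (m a α b) β c = m a α (m b β c)

/-- `gamma γ` is the letter γ and `word l x r` the word `l x r`, an absent outer letter being
`none`. The parameters `m` and `γ₀` only serve to carry the multiplication. -/
inductive NormalForm (S Γ : Type) (_m : S → Γ → S → S) (_γ₀ : Γ) : Type
  | gamma (γ : Γ)
  | word (l : Option Γ) (x : S) (r : Option Γ)

namespace NormalForm

variable {m : S → Γ → S → S} {γ₀ : Γ}

/-- In `x r l' y` the inner letters reduce to the first one present, or to γ₀ if there is none. -/
instance : Mul (NormalForm S Γ m γ₀) where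
  mul
    | gamma γ, gamma _ => gamma γ
    | gamma γ, word _ x r => word (some γ) x r
    | word l x r, gamma γ => word l x (r.or (some γ))
    | word l x r, word l' y r' => word l (m x ((r.or l').getD γ₀) y) r'

@[simp]
theorem gamma_mul_gamma (γ γ' : Γ) : (gamma γ * gamma γ' : NormalForm S Γ m γ₀) = gamma γ :=
  rfl

@[simp]
theorem gamma_mul_word (γ : Γ) (l r : Option Γ) (x : S) :
    (gamma γ * word l x r : NormalForm S Γ m γ₀) = word (some γ) x r :=
  rfl

@[simp]
theorem word_mul_gamma (l r : Option Γ) (x : S) (γ : Γ) :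
    (word l x r * gamma γ : NormalForm S Γ m γ₀) = word l x (r.or (some γ)) :=
  rfl

@[simp]
theorem word_mul_word (l r l' r' : Option Γ) (x y : S) :
    (word l x r * word l' y r' : NormalForm S Γ m γ₀) = word l (m x ((r.or l').getD γ₀) y) r' :=
  rfl

abbrev semigroup (assoc : IsGammaAssoc m) : Semigroup (NormalForm S Γ m γ₀) where
  mul_assoc a b c := by
    rcases a with γ | ⟨l, x, r⟩ <;> rcases b with γ' | ⟨l', y, r'⟩ <;>
      rcases c with γ'' | ⟨l'', z, r''⟩ <;>
      simp only [gamma_mul_gamma, gamma_mul_word, word_mul_gamma, word_mul_word, Option.or_assoc,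
        Option.some_or, assoc]

def ofLetter : S ⊕ Γ → NormalForm S Γ m γ₀ :=
  Sum.elim (fun x => word none x none) gamma

end NormalForm

variable {m : S → Γ → S → S} {γ₀ : Γ}

def normalFormHom (assoc : IsGammaAssoc m) :
    FreeSemigroup (S ⊕ Γ) →ₙ* NormalForm S Γ m γ₀ :=
  letI := NormalForm.semigroup (γ₀ := γ₀) assoc
  FreeSemigroup.lift (NormalForm.ofLetter (m := m) (γ₀ := γ₀))

theorem gCon_le_ker_normalFormHom (assoc : IsGammaAssoc m) :
    GCon m γ₀ ≤ Con.ker (normalFormHom (γ₀ := γ₀) assoc) := by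
  refine Con.conGen_le.2 ?_
  rintro a b (⟨γ₁, γ₂, rfl, rfl⟩ | ⟨x, y, γ, rfl, rfl⟩ | ⟨x, y, rfl, rfl⟩) <;>
    simp only [Con.ker_rel, map_mul] <;> rfl

theorem giota_mul_giota (γ γ' : Γ) : giota m γ₀ γ * giota m γ₀ γ' = giota m γ₀ γ :=
  (Con.eq _).2 <| ConGen.Rel.of _ _ <| Or.inl ⟨γ, γ', rfl, rfl⟩

theorem gmu_mul_giota_mul_gmu (x y : S) (γ : Γ) :
    gmu m γ₀ x * (giota m γ₀ γ * gmu m γ₀ y) = gmu m γ₀ (m x γ y) := by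
  rw [← mul_assoc]
  exact (Con.eq _).2 <| ConGen.Rel.of _ _ <| Or.inr <| Or.inl ⟨x, y, γ, rfl, rfl⟩

theorem gmu_mul_gmu (x y : S) : gmu m γ₀ x * gmu m γ₀ y = gmu m γ₀ (m x γ₀ y) :=
  (Con.eq _).2 <| ConGen.Rel.of _ _ <| Or.inr <| Or.inr ⟨x, y, rfl, rfl⟩

theorem giota_mul_giota_mul (γ γ' : Γ) (w : USem m γ₀) :
    giota m γ₀ γ * (giota m γ₀ γ' * w) = giota m γ₀ γ * w := by
  rw [← mul_assoc, giota_mul_giota]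

theorem gmu_mul_giota_mul_gmu_mul (x y : S) (γ : Γ) (w : USem m γ₀) :
    gmu m γ₀ x * (giota m γ₀ γ * (gmu m γ₀ y * w)) = gmu m γ₀ (m x γ y) * w := by
  rw [← gmu_mul_giota_mul_gmu, mul_assoc, mul_assoc]

theorem gmu_mul_gmu_mul (x y : S) (w : USem m γ₀) :
    gmu m γ₀ x * (gmu m γ₀ y * w) = gmu m γ₀ (m x γ₀ y) * w := by
  rw [← mul_assoc, gmu_mul_gmu]

variable (m γ₀) in
def ofNormalForm : NormalForm S Γ m γ₀ → USem m γ₀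
  | .gamma γ => giota m γ₀ γ
  | .word none x none => gmu m γ₀ x
  | .word (some γ) x none => giota m γ₀ γ * gmu m γ₀ x
  | .word none x (some γ) => gmu m γ₀ x * giota m γ₀ γ
  | .word (some γ) x (some γ') => giota m γ₀ γ * gmu m γ₀ x * giota m γ₀ γ'

theorem ofNormalForm_mul (a b : NormalForm S Γ m γ₀) :
    ofNormalForm m γ₀ (a * b) = ofNormalForm m γ₀ a * ofNormalForm m γ₀ b := by
  rcases a with γ | ⟨_ | γ, x, _ | γ'⟩ <;> rcases b with δ | ⟨_ | δ, y, _ | δ'⟩ <;>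
    simp [ofNormalForm, mul_assoc, giota_mul_giota, gmu_mul_gmu, giota_mul_giota_mul,
      gmu_mul_giota_mul_gmu_mul, gmu_mul_gmu_mul, gmu_mul_giota_mul_gmu]

def normalForm (assoc : IsGammaAssoc m) : USem m γ₀ →ₙ* NormalForm S Γ m γ₀ where
  toFun w := Con.liftOn w (normalFormHom assoc) fun _ _ h => gCon_le_ker_normalFormHom assoc h
  map_mul' w v := Con.induction_on₂ w v fun a b => map_mul (normalFormHom assoc) a b

theorem ofNormalForm_normalForm (assoc : IsGammaAssoc m) (w : USem m γ₀) :
    ofNormalForm m γ₀ (normalForm assoc w) = w := by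
  induction w using Con.induction_on with | _ f =>
  induction f using FreeSemigroup.recOnMul with
  | ih1 a => cases a <;> rfl
  | ih2 a f iha ihf => rw [Con.coe_mul, map_mul, ofNormalForm_mul, iha, ihf]

theorem normalForm_ofNormalForm (assoc : IsGammaAssoc m) (n : NormalForm S Γ m γ₀) :
    normalForm assoc (ofNormalForm m γ₀ n) = n := by
  rcases n with γ | ⟨_ | γ, x, _ | γ'⟩ <;> simp only [ofNormalForm, map_mul] <;> rfl

def equivNormalForm (assoc : IsGammaAssoc m) : USem m γ₀ ≃* NormalForm S Γ m γ₀ :=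
  { normalForm assoc with
    invFun := ofNormalForm m γ₀
    left_inv := ofNormalForm_normalForm assoc
    right_inv := normalForm_ofNormalForm assoc }

@[simp]
theorem equivNormalForm_gmu (assoc : IsGammaAssoc m) (x : S) :
    equivNormalForm assoc (gmu m γ₀ x) = .word none x none :=
  rfl

@[simp]
theorem equivNormalForm_giota (assoc : IsGammaAssoc m) (γ : Γ) :
    equivNormalForm assoc (giota m γ₀ γ) = .gamma γ :=
  rfl

theorem mem_USem'_iff (assoc : IsGammaAssoc m) {w : USem m γ₀} :
    w ∈ USem' m γ₀ ↔ ∃ l x r, equivNormalForm assoc w = .word l x r := by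
  constructor
  · intro hw
    rcases h : equivNormalForm assoc w with γ | ⟨l, x, r⟩
    · rw [← equivNormalForm_giota assoc, (equivNormalForm assoc).apply_eq_iff_eq] at h
      exact absurd ⟨γ, h⟩ hw
    · exact ⟨l, x, r, rfl⟩
  · rintro ⟨l, x, r, h⟩ ⟨γ, rfl⟩
    simp at h

theorem gmu_mem_USem' (assoc : IsGammaAssoc m) (x : S) : gmu m γ₀ x ∈ USem' m γ₀ :=
  (mem_USem'_iff assoc).2 ⟨none, x, none, rfl⟩

theorem mul_mem_USem' (assoc : IsGammaAssoc m) {a b : USem m γ₀} (ha : a ∈ USem' m γ₀)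
    (hb : b ∈ USem' m γ₀) : a * b ∈ USem' m γ₀ := by
  obtain ⟨l, x, r, ha⟩ := (mem_USem'_iff assoc).1 ha
  obtain ⟨l', y, r', hb⟩ := (mem_USem'_iff assoc).1 hb
  exact (mem_USem'_iff assoc).2 ⟨_, _, _, by rw [map_mul, ha, hb, NormalForm.word_mul_word]⟩

theorem exists_gmu_mul_mul_gmu_eq_gmu (assoc : IsGammaAssoc m) (s t : S) (w : USem m γ₀) :
    ∃ x, gmu m γ₀ s * w * gmu m γ₀ t = gmu m γ₀ x := by
  rcases h : equivNormalForm assoc w with γ | ⟨l, y, r⟩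
  · exact ⟨m s γ t, (equivNormalForm assoc).injective (by simp [h])⟩
  · exact ⟨m (m s (l.getD γ₀) y) (r.getD γ₀) t, (equivNormalForm assoc).injective (by simp [h])⟩

theorem exists_eq_mul_gmu_mul (assoc : IsGammaAssoc m) (hsurj : ∀ x, ∃ a b, x = m a γ₀ b)
    {w : USem m γ₀} (hw : w ∈ USem' m γ₀) :
    ∃ u ∈ USem' m γ₀, ∃ b, ∃ v ∈ USem' m γ₀, w = u * gmu m γ₀ b * v := by
  obtain ⟨l, x, r, hw⟩ := (mem_USem'_iff assoc).1 hw
  obtain ⟨a, y, rfl⟩ := hsurj x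
  obtain ⟨b, c, rfl⟩ := hsurj y
  let e := equivNormalForm (γ₀ := γ₀) assoc
  refine ⟨e.symm (.word l a none), (mem_USem'_iff assoc).2 ⟨_, _, _, e.apply_symm_apply _⟩, b,
    e.symm (.word none c r), (mem_USem'_iff assoc).2 ⟨_, _, _, e.apply_symm_apply _⟩,
    e.injective ?_⟩
  simp [e, hw, assoc]

end GammaSemigroup

theorem SimpleAt.exists_eq_mul {S Γ : Type} {m : S → Γ → S → S} {γ₀ : Γ} (h : SimpleAt m γ₀)
    (x : S) : ∃ a b, x = m a γ₀ b :=
  Set.eq_univ_iff_forall.1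
    (h {y | ∃ a b, y = m a γ₀ b} ⟨m x γ₀ x, x, x, rfl⟩ fun t j _ => ⟨⟨t, j, rfl⟩, ⟨j, t, rfl⟩⟩) x

open GammaSemigroup in
theorem stmt_general (S Γ : Type) (m : S → Γ → S → S)
    (assoc : ∀ (a b c : S) (α β : Γ), m (m a α b) β c = m a α (m b β c)) (γ₀ : Γ) (hsimple : SimpleAt m γ₀) :
    (∀ a ∈ USem' m γ₀, ∀ b ∈ USem' m γ₀, a * b ∈ USem' m γ₀) ∧
    (∀ J ⊆ USem' m γ₀, J.Nonempty →
      (∀ a ∈ USem' m γ₀, ∀ j ∈ J, a * j ∈ J ∧ j * a ∈ J) → J = USem' m γ₀) := by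
  refine ⟨fun a ha b hb => mul_mem_USem' assoc ha hb, fun J hJ ⟨j, hj⟩ hideal => ?_⟩
  have factor := fun w (hw : w ∈ USem' m γ₀) =>
    exists_eq_mul_gmu_mul assoc hsimple.exists_eq_mul hw
  have hμ := gmu_mem_USem' (γ₀ := γ₀) assoc
  obtain ⟨-, -, b, -⟩ := factor j (hJ hj)
  obtain ⟨x, hx⟩ := exists_gmu_mul_mul_gmu_eq_gmu assoc b b j
  have hxJ : gmu m γ₀ x ∈ J := hx ▸ (hideal _ (hμ b) _ (hideal _ (hμ b) _ hj).1).2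
  have hall : ∀ y, gmu m γ₀ y ∈ J := by
    refine Set.eq_univ_iff_forall.1 (hsimple {y | gmu m γ₀ y ∈ J} ⟨x, hxJ⟩ fun t y hy => ?_)
    simp only [Set.mem_ofPred_eq, ← gmu_mul_gmu]
    exact hideal _ (hμ t) _ hy
  refine hJ.antisymm fun w hw => ?_
  obtain ⟨u, hu, b, v, hv, rfl⟩ := factor w hw
  exact (hideal v hv _ (hideal u hu _ (hall b)).1).2

theorem stmt (S Γ : Type) [Nonempty S] [Nonempty Γ] (m : S → Γ → S → S)
    (assoc : ∀ (a b c : S) (α β : Γ), m (m a α b) β c = m a α (m b β c)) (γ₀ : Γ) (hsimple : SimpleAt m γ₀) :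
    (∀ a ∈ USem' m γ₀, ∀ b ∈ USem' m γ₀, a * b ∈ USem' m γ₀) ∧
    (∀ J ⊆ USem' m γ₀, J.Nonempty →
      (∀ a ∈ USem' m γ₀, ∀ j ∈ J, a * j ∈ J ∧ j * a ∈ J) → J = USem' m γ₀) :=
  stmt_general S Γ m assoc γ₀ hsimple
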